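/- Let (μ, (f_i)_{i∈Z_N}) be a monic system on K_N, and let S_i f = f_i·(f∘σ) be the associated operators on L²(μ). Define g_i(x) = f_i(x)/|f_i(x)|² when f_i(x) ≠ 0 and g_i(x) = 0 otherwise. Then the adjoint of S_i is given by S_i* f = (conj(g_i)∘σ_i)·(f∘σ_i). -/

import Mathlib

/-!
The weight `g_i` is `(conj f_i)⁻¹` (with `0⁻¹ = 0`), so the claim reads
`S_i* g = (f_i⁻¹ g) ∘ σ_i`. Since `μ ∘ σ_i⁻¹ = |f_i|² μ` and `σ ∘ σ_i = id`, the substitution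
`x = σ_i y` gives
`∫ conj((f_i⁻¹ g) ∘ σ_i) h dμ = ∫ |f_i|² conj(f_i⁻¹ g) (h ∘ σ) dμ = ∫ conj g f_i (h ∘ σ) dμ`,
which is `⟨g, S_i h⟩`; the same substitution bounds `‖(f_i⁻¹ g) ∘ σ_i‖₂` by `‖g‖₂`, because
`|f_i|² |f_i⁻¹|² ≤ 1`.
-/

open MeasureTheory ENNReal

noncomputable section

abbrev Word (N : ℕ) := ℕ → Fin N

/-- The left shift `σ` deleting the first letter. -/
def shift {N : ℕ} (ω : Word N) : Word N := fun n => ω (n + 1)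

/-- The map `σ_i` prepending the letter `i`. -/
def prepend {N : ℕ} (i : Fin N) (ω : Word N) : Word N :=
  fun n => match n with
  | 0 => i
  | n + 1 => ω n

/-- The cylinder set determined by a finite word. -/
def cyl {N : ℕ} (w : List (Fin N)) : Set (Word N) :=
  {ω | ∀ k : Fin w.length, ω k = w.get k}


open ComplexConjugate

lemma Complex.div_sq_norm_eq_inv_conj (z : ℂ) : z / (‖z‖ : ℂ) ^ 2 = (conj z)⁻¹ := by
  rcases eq_or_ne z 0 with rfl | hz
  · simp
  · rw [← Complex.mul_conj', div_mul_cancel_left₀ hz, inv_eq_one_div]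

lemma Complex.sq_norm_mul_inv_conj (z : ℂ) : (‖z‖ : ℂ) ^ 2 * (conj z)⁻¹ = z := by
  rcases eq_or_ne z 0 with rfl | hz
  · simp
  · rw [← Complex.mul_conj', mul_inv_cancel_right₀ ((map_ne_zero _).2 hz)]

lemma enorm_mul_inv_mul_le {𝕜 : Type*} [NormedDivisionRing 𝕜] (a b : 𝕜) :
    ‖a‖ₑ * ‖a⁻¹ * b‖ₑ ≤ ‖b‖ₑ := by
  rw [← enorm_mul]
  rcases eq_or_ne a 0 with rfl | ha
  · simp
  · rw [mul_inv_cancel_left₀ ha]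

namespace WeightedComposition

variable {X : Type*} [MeasurableSpace X] {μ : Measure X} {τ σ : X → X} {F : X → ℂ}

lemma lintegral_comp_eq_lintegral_mul (hτ : AEMeasurable τ μ) (hF : AEMeasurable F μ)
    (hmap : μ.map τ = μ.withDensity fun x => ‖F x‖ₑ ^ 2) {u : X → ℝ≥0∞}
    (hu : AEMeasurable u (μ.map τ)) :
    ∫⁻ x, u (τ x) ∂μ = ∫⁻ x, ‖F x‖ₑ ^ 2 * u x ∂μ := by
  rw [← lintegral_map' hu hτ, hmap, lintegral_withDensity_eq_lintegral_mul₀' (by fun_prop)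
    (hmap ▸ hu)]
  rfl

lemma integral_comp_eq_integral_smul {E : Type*} [NormedAddCommGroup E] [NormedSpace ℝ E]
    (hτ : AEMeasurable τ μ) (hF : AEMeasurable F μ)
    (hmap : μ.map τ = μ.withDensity fun x => ‖F x‖ₑ ^ 2) {u : X → E}
    (hu : AEStronglyMeasurable u (μ.map τ)) :
    ∫ x, u (τ x) ∂μ = ∫ x, ‖F x‖ ^ 2 • u x ∂μ := by
  have hd : (fun x => ‖F x‖ₑ ^ 2) = fun x => ((‖F x‖₊ ^ 2 : NNReal) : ℝ≥0∞) := by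
    simp [enorm_eq_nnnorm]
  rw [← integral_map hτ hu, hmap, hd, integral_withDensity_eq_integral_smul₀ (by fun_prop)]
  rfl

lemma map_absolutelyContinuous (hmap : μ.map τ = μ.withDensity fun x => ‖F x‖ₑ ^ 2) :
    μ.map τ ≪ μ :=
  hmap ▸ withDensity_absolutelyContinuous _ _

lemma memLp_inv_mul_comp (hτ : AEMeasurable τ μ) (hF : AEMeasurable F μ)
    (hmap : μ.map τ = μ.withDensity fun x => ‖F x‖ₑ ^ 2) {g : X → ℂ} (hg : MemLp g 2 μ) :
    MemLp (fun x => (F (τ x))⁻¹ * g (τ x)) 2 μ := by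
  have hψ : AEStronglyMeasurable (fun x => (F x)⁻¹ * g x) (μ.map τ) :=
    (hF.inv.aestronglyMeasurable.mul hg.1).mono_ac (map_absolutelyContinuous hmap)
  refine ⟨hψ.comp_aemeasurable hτ, ?_⟩
  have hg2 := hg.2
  rw [eLpNorm_lt_top_iff_lintegral_rpow_enorm_lt_top two_ne_zero ofNat_ne_top] at hg2 ⊢
  simp only [toReal_ofNat, rpow_ofNat] at hg2 ⊢
  calc ∫⁻ x, ‖(F (τ x))⁻¹ * g (τ x)‖ₑ ^ 2 ∂μ
      = ∫⁻ x, ‖F x‖ₑ ^ 2 * ‖(F x)⁻¹ * g x‖ₑ ^ 2 ∂μ :=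
        lintegral_comp_eq_lintegral_mul hτ hF hmap (hψ.enorm.pow_const 2)
    _ ≤ ∫⁻ x, ‖g x‖ₑ ^ 2 ∂μ := lintegral_mono fun x => by
        rw [← mul_pow]; exact pow_le_pow_left' (enorm_mul_inv_mul_le _ _) 2
    _ < ∞ := hg2

lemma integral_conj_inv_mul_comp_mul (hτ : Measurable τ) (hσ : Measurable σ)
    (hστ : Function.LeftInverse σ τ) (hF : AEMeasurable F μ)
    (hmap : μ.map τ = μ.withDensity fun x => ‖F x‖ₑ ^ 2) {g h : X → ℂ}
    (hg : AEStronglyMeasurable g μ) (hh : AEStronglyMeasurable h μ) :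
    ∫ x, conj ((F (τ x))⁻¹ * g (τ x)) * h x ∂μ =
      ∫ x, conj (g x) * (F x * h (σ x)) ∂μ := by
  have hσ_map : (μ.map τ).map σ = μ := by
    rw [Measure.map_map hσ hτ, hστ.comp_eq_id, Measure.map_id]
  have hu : AEStronglyMeasurable (fun y => conj ((F y)⁻¹ * g y) * h (σ y)) (μ.map τ) := by
    refine (Complex.continuous_conj.comp_aestronglyMeasurable ?_).mul ?_
    · exact (hF.inv.aestronglyMeasurable.mul hg).mono_ac (map_absolutelyContinuous hmap)
    · exact (hσ_map ▸ hh).comp_measurable hσ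
  calc ∫ x, conj ((F (τ x))⁻¹ * g (τ x)) * h x ∂μ
      = ∫ x, conj ((F (τ x))⁻¹ * g (τ x)) * h (σ (τ x)) ∂μ := by simp only [hστ _]
    _ = ∫ x, ‖F x‖ ^ 2 • (conj ((F x)⁻¹ * g x) * h (σ x)) ∂μ :=
        integral_comp_eq_integral_smul hτ.aemeasurable hF hmap hu
    _ = ∫ x, conj (g x) * (F x * h (σ x)) ∂μ := by
        congr 1 with x
        rw [Complex.real_smul, map_mul, map_inv₀, Complex.ofReal_pow]
        linear_combination conj (g x) * h (σ x) * Complex.sq_norm_mul_inv_conj (F x)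

theorem adjoint_apply_ae_eq (hτ : Measurable τ) (hσ : Measurable σ)
    (hστ : Function.LeftInverse σ τ) (hF : AEMeasurable F μ)
    (hmap : μ.map τ = μ.withDensity fun x => ‖F x‖ₑ ^ 2) (S : Lp ℂ 2 μ →L[ℂ] Lp ℂ 2 μ)
    (hS : ∀ h : Lp ℂ 2 μ, S h =ᵐ[μ] fun x => F x * h (σ x)) (g : Lp ℂ 2 μ) :
    S.adjoint g =ᵐ[μ] fun x => (F (τ x))⁻¹ * g (τ x) := by
  have hφ := memLp_inv_mul_comp hτ.aemeasurable hF hmap (Lp.memLp g)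
  suffices S.adjoint g = hφ.toLp _ from this ▸ hφ.coeFn_toLp
  refine ext_inner_right ℂ fun h => ?_
  rw [ContinuousLinearMap.adjoint_inner_left, L2.inner_def, L2.inner_def]
  simp only [RCLike.inner_apply']
  calc ∫ x, conj (g x) * S h x ∂μ = ∫ x, conj (g x) * (F x * h (σ x)) ∂μ :=
        integral_congr_ae <| by filter_upwards [hS h] with x hx; rw [hx]
    _ = ∫ x, conj ((F (τ x))⁻¹ * g (τ x)) * h x ∂μ :=
        (integral_conj_inv_mul_comp_mul hτ hσ hστ hF hmap (Lp.aestronglyMeasurable g)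
          (Lp.aestronglyMeasurable h)).symm
    _ = ∫ x, conj (hφ.toLp _ x) * h x ∂μ :=
        integral_congr_ae <| by filter_upwards [hφ.coeFn_toLp] with x hx; rw [hx]

end WeightedComposition

lemma measurable_shift {N : ℕ} : Measurable (shift (N := N)) :=
  measurable_pi_lambda _ fun n => measurable_pi_apply (n + 1)

lemma measurable_prepend {N : ℕ} (i : Fin N) : Measurable (prepend i) :=
  measurable_pi_lambda _ fun n => by
    cases n with
    | zero => exact measurable_const
    | succ n => exact measurable_pi_apply n

lemma shift_leftInverse_prepend {N : ℕ} (i : Fin N) :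
    Function.LeftInverse shift (prepend i) :=
  fun _ => rfl

theorem monicSystem_adjoint_formula_general {N : ℕ}
    (μ : Measure (Word N)) [IsFiniteMeasure μ] (f : Fin N → Word N → ℂ)
    (hf2 : ∀ i, MemLp (f i) 2 μ)
    (hac : ∀ i, μ.map (prepend i) ≪ μ)
    (hrn : ∀ i, (μ.map (prepend i)).rnDeriv μ =ᵐ[μ]
      fun x => ENNReal.ofReal (‖f i x‖ ^ 2))
    (S : Fin N → (Lp ℂ 2 μ →L[ℂ] Lp ℂ 2 μ))
    (hS : ∀ i (g : Lp ℂ 2 μ), ⇑(S i g) =ᵐ[μ] fun x => f i x * g (shift x))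
    (g' : Fin N → Word N → ℂ)
    (hg' : ∀ i x, g' i x = if f i x ≠ 0 then f i x / (‖f i x‖ : ℂ) ^ 2 else 0) :
    ∀ i (g : Lp ℂ 2 μ),
      ⇑(ContinuousLinearMap.adjoint (S i) g) =ᵐ[μ]
        fun x => (starRingEnd ℂ) (g' i (prepend i x)) * g (prepend i x) := by
  intro i g
  have hmap : μ.map (prepend i) = μ.withDensity fun x => ‖f i x‖ₑ ^ 2 := by
    have := Measure.haveLebesgueDecomposition_of_sigmaFinite (μ.map (prepend i)) μ
    rw [← Measure.withDensity_rnDeriv_eq _ μ (hac i)]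
    refine withDensity_congr_ae ?_
    filter_upwards [hrn i] with x hx
    rw [hx, ofReal_pow (norm_nonneg _), ofReal_norm]
  have hg'_conj : ∀ x, conj (g' i x) = (f i x)⁻¹ := fun x => by
    rcases eq_or_ne (f i x) 0 with h | h <;> simp [hg', h, Complex.div_sq_norm_eq_inv_conj]
  simpa only [hg'_conj] using WeightedComposition.adjoint_apply_ae_eq (measurable_prepend i)
    measurable_shift (shift_leftInverse_prepend i) (hf2 i).1.aemeasurable hmap (S i) (hS i) g

theorem monicSystem_adjoint_formula {N : ℕ} (hN : 2 ≤ N)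
    (μ : Measure (Word N)) [IsFiniteMeasure μ] (f : Fin N → Word N → ℂ)
    (hf2 : ∀ i, MemLp (f i) 2 μ)
    (hac : ∀ i, μ.map (prepend i) ≪ μ)
    (hrn : ∀ i, (μ.map (prepend i)).rnDeriv μ =ᵐ[μ]
      fun x => ENNReal.ofReal (‖f i x‖ ^ 2))
    (hne : ∀ i, ∀ᵐ x ∂μ, x 0 = i → f i x ≠ 0)
    (S : Fin N → (Lp ℂ 2 μ →L[ℂ] Lp ℂ 2 μ))
    (hS : ∀ i (g : Lp ℂ 2 μ), ⇑(S i g) =ᵐ[μ] fun x => f i x * g (shift x))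
    (g' : Fin N → Word N → ℂ)
    (hg' : ∀ i x, g' i x = if f i x ≠ 0 then f i x / (‖f i x‖ : ℂ) ^ 2 else 0) :
    ∀ i (g : Lp ℂ 2 μ),
      ⇑(ContinuousLinearMap.adjoint (S i) g) =ᵐ[μ]
        fun x => (starRingEnd ℂ) (g' i (prepend i x)) * g (prepend i x) :=
  monicSystem_adjoint_formula_general μ f hf2 hac hrn S hS g' hg'
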